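/- The Grossman–Larson product on G, defined by c ⋆ d := (c ◁ d) · d, is associative, has identity e = (1∅, 0), and in components equals c ⋆ d = ((c1 ∘̃ d) ⧢ d1, (c2 ∘̃ d) + (c1 ∘̃ d) ⧢ d2); thus (G, ⋆) is a monoid. -/

import Mathlib

/-- Words over the alphabet X = {x₀, x₁}, encoded as lists of booleans
(`false` ↔ x₀, `true` ↔ x₁). -/
abbrev Word : Type := List Bool

/-- Noncommutative formal power series over X with real coefficients. -/
abbrev Series : Type := Word → ℝ

/-- Auxiliary recursion computing the coefficient of the shuffle product. -/
def sh : Word → Series → Series → ℝ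
  | [], c, d => c [] * d []
  | a :: w, c, d => sh w (fun u => c (a :: u)) d + sh w c (fun u => d (a :: u))

/-- The shuffle product of two series. -/
def shuffle (c d : Series) : Series := fun w => sh w c d

/-- Left concatenation by the letter x₀. -/
def X0f (c : Series) : Series := fun w =>
  match w with
  | false :: w' => c w'
  | _ => 0

/-- Left concatenation by the letter x₁. -/
def X1f (c : Series) : Series := fun w =>
  match w with
  | true :: w' => c w'
  | _ => 0

/-- The indicator series of a word. -/
def deltaW (η : Word) : Series := fun w => if w = η then 1 else 0

/-- The shuffle unit 1∅. -/
def oneS : Series := deltaW []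

/-- Mixed composition product of a word with a pair of series:
∅ ∘̃ z = ∅, (x₀η) ∘̃ z = x₀(η ∘̃ z),
(x₁η) ∘̃ z = x₁(z₁ ⧢ (η ∘̃ z)) + x₀(z₂ ⧢ (η ∘̃ z)). -/
def wmix : Word → Series × Series → Series
  | [], _ => oneS
  | false :: η, z => X0f (wmix η z)
  | true :: η, z => X1f (shuffle z.1 (wmix η z)) + X0f (shuffle z.2 (wmix η z))

/-- Mixed composition product `c ∘̃ z`, extended linearly in the left argument.
(Since `wmix η z` vanishes on words shorter than `η`, the sum may be truncated.) -/
def mixcomp (c : Series) (z : Series × Series) : Series := fun w =>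
  ∑ n ∈ Finset.range (w.length + 1), ∑ f : Fin n → Bool,
    c (List.ofFn f) * wmix (List.ofFn f) z w

/-- Composition product of a word with a series:
∅ ∘ d = ∅, (x₀η) ∘ d = x₀(η ∘ d), (x₁η) ∘ d = x₀(d ⧢ (η ∘ d)). -/
def wcomp : Word → Series → Series
  | [], _ => oneS
  | false :: η, d => X0f (wcomp η d)
  | true :: η, d => X0f (shuffle d (wcomp η d))

/-- Composition product `c ∘ d`, extended linearly in the left argument. -/
def compP (c d : Series) : Series := fun w =>
  ∑ n ∈ Finset.range (w.length + 1), ∑ f : Fin n → Bool,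
    c (List.ofFn f) * wcomp (List.ofFn f) d w

/-- The group product on G: (c₁,c₂)·(d₁,d₂) = (c₁ ⧢ d₁, c₂ + c₁ ⧢ d₂). -/
def gmul (c d : Series × Series) : Series × Series :=
  (shuffle c.1 d.1, c.2 + shuffle c.1 d.2)

/-- The identity element e = (1∅, 0) of G. -/
def geId : Series × Series := (oneS, 0)

/-- Shuffle powers. -/
def shPow (c : Series) : ℕ → Series
  | 0 => oneS
  | n + 1 => shuffle c (shPow c n)

/-- Shuffle inverse of a series with constant coefficient 1, via the
geometric series c^{⧢ -1} = Σ_k (1∅ - c)^{⧢ k} (truncated by word length,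
which is exact since 1∅ - c is proper). -/
def shInv (c : Series) : Series := fun w =>
  ∑ k ∈ Finset.range (w.length + 1), shPow (oneS - c) k w

/-- The group inverse in (G,·). -/
def ginv (c : Series × Series) : Series × Series :=
  (shInv c.1, -(shuffle (shInv c.1) c.2))

/-- The product ◁ on G, componentwise mixed composition. -/
def triOp (c d : Series × Series) : Series × Series :=
  (mixcomp c.1 d, mixcomp c.2 d)

/-- The Grossman–Larson product c ⋆ d = (c ◁ d) · d. -/
def starOp (c d : Series × Series) : Series × Series := gmul (triOp c d) d

/-!
Write `a⁻¹c` for the left quotient of a series by a letter. Each `a⁻¹` is a derivation of `⧢`, a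
series is determined by its constant term and its two quotients, and the definition of `∘̃` gives
`x₁⁻¹(c ∘̃ d) = d₁ ⧢ (x₁⁻¹c ∘̃ d)` and `x₀⁻¹(c ∘̃ d) = x₀⁻¹c ∘̃ d + d₂ ⧢ (x₁⁻¹c ∘̃ d)`.
Comparing quotients, by induction on word length, shows that `· ∘̃ d` is a morphism of shuffle
algebras and that `(c ∘̃ d) ∘̃ e = c ∘̃ (d ⋆ e)`; associativity of `⋆` then follows componentwise
from associativity of `⧢`, and `c ∘̃ (1∅, 0) = c`, `1∅ ∘̃ d = 1∅` give the unit laws.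
-/

/-- The left quotient `a⁻¹c` of a series by a letter. -/
def leftQuot (a : Bool) (c : Series) : Series := fun u => c (a :: u)

theorem Word.length_induction {motive : Word → Prop} (nil : motive [])
    (cons : ∀ a w, (∀ u : Word, u.length ≤ w.length → motive u) → motive (a :: w))
    (w : Word) : motive w := by
  induction h : w.length using Nat.strong_induction_on generalizing w with
  | _ n ih =>
    match w with
    | [] => exact nil
    | a :: w =>
      exact cons a w fun u hu => ih u.length (by simp at h; omega) u rfl

section Shuffle

variable (a : Bool) (c d : Series) (w : Word)

theorem shuffle_nil : shuffle c d [] = c [] * d [] := rfl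

theorem shuffle_cons :
    shuffle c d (a :: w) = shuffle (leftQuot a c) d w + shuffle c (leftQuot a d) w := rfl

theorem leftQuot_shuffle :
    leftQuot a (shuffle c d) = shuffle (leftQuot a c) d + shuffle c (leftQuot a d) := rfl

theorem shuffle_comm : shuffle c d = shuffle d c := by
  funext w
  induction w generalizing c d with
  | nil => exact mul_comm _ _
  | cons a w ih => rw [shuffle_cons, shuffle_cons, ih, add_comm, ih]

theorem shuffle_add_right (d' : Series) : shuffle c (d + d') = shuffle c d + shuffle c d' := by
  funext w
  induction w generalizing c d d' with
  | nil => exact mul_add _ _ _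
  | cons a w ih =>
    simp only [Pi.add_apply] at ih ⊢
    rw [shuffle_cons, shuffle_cons, shuffle_cons]
    change _ + shuffle c (leftQuot a d + leftQuot a d') w = _
    rw [ih, ih]
    ring

theorem shuffle_add_left (c' : Series) : shuffle (c + c') d = shuffle c d + shuffle c' d := by
  rw [shuffle_comm, shuffle_add_right, shuffle_comm d, shuffle_comm d]

theorem shuffle_smul_right (r : ℝ) : shuffle c (r • d) = r • shuffle c d := by
  funext w
  induction w generalizing c d with
  | nil => exact mul_left_comm _ _ _
  | cons a w ih =>
    simp only [Pi.smul_apply, smul_eq_mul] at ih ⊢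
    rw [shuffle_cons, shuffle_cons]
    change _ + shuffle c (r • leftQuot a d) w = _
    rw [ih, ih]
    ring

theorem shuffle_zero_right : shuffle c 0 = 0 := by
  simpa using shuffle_smul_right c 0 0

theorem shuffle_zero_left : shuffle 0 d = 0 := by
  rw [shuffle_comm, shuffle_zero_right]

theorem leftQuot_oneS : leftQuot a oneS = 0 := by
  funext u
  simp [leftQuot, oneS, deltaW]

theorem oneS_shuffle : shuffle oneS d = d := by
  funext w
  induction w generalizing d with
  | nil => simp [shuffle_nil, oneS, deltaW]
  | cons a w ih =>
    rw [shuffle_cons, leftQuot_oneS, shuffle_zero_left, ih, Pi.zero_apply, zero_add]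
    rfl

theorem shuffle_oneS : shuffle c oneS = c := by
  rw [shuffle_comm, oneS_shuffle]

theorem shuffle_assoc (e : Series) : shuffle (shuffle c d) e = shuffle c (shuffle d e) := by
  funext w
  induction w generalizing c d e with
  | nil => exact mul_assoc _ _ _
  | cons a w ih =>
    rw [shuffle_cons, shuffle_cons (c := c), leftQuot_shuffle, leftQuot_shuffle, shuffle_add_left,
      shuffle_add_right]
    simp only [Pi.add_apply, ih]
    ring

theorem shuffle_left_comm (e : Series) : shuffle c (shuffle d e) = shuffle d (shuffle c e) := by
  rw [← shuffle_assoc, shuffle_comm c, shuffle_assoc]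

variable {d} in
theorem shuffle_congr_right {d' : Series} (h : ∀ u : Word, u.length ≤ w.length → d u = d' u) :
    shuffle c d w = shuffle c d' w := by
  induction w generalizing c d d' with
  | nil => rw [shuffle_nil, shuffle_nil, h [] le_rfl]
  | cons a w ih =>
    rw [shuffle_cons, shuffle_cons]
    congr 1
    · exact ih _ fun u hu => h u (by simp; omega)
    · exact ih _ fun u hu => h (a :: u) (by simpa using hu)

def shuffleLeft : Series →ₗ[ℝ] Series where
  toFun := shuffle c
  map_add' := shuffle_add_right c
  map_smul' r d := shuffle_smul_right c d r

end Shuffle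

theorem wmix_apply_of_length_lt (z : Series × Series) :
    ∀ (η w : Word), w.length < η.length → wmix η z w = 0
  | [], _, h => absurd h (Nat.not_lt_zero _)
  | false :: _, [], _ => rfl
  | true :: _, [], _ => by simp [wmix, X0f, X1f]
  | false :: η, false :: w, h => wmix_apply_of_length_lt z η w (by simpa using h)
  | false :: _, true :: _, _ => rfl
  | true :: η, a :: w, h => by
    have hvan : ∀ s, shuffle s (wmix η z) w = 0 := fun s => by
      rw [shuffle_congr_right s w (d' := 0) fun u hu =>
        wmix_apply_of_length_lt z η u (by simp at h; omega), shuffle_zero_right, Pi.zero_apply]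
    cases a <;> simp [wmix, X0f, X1f, hvan]

section WordSum

variable {M : Type*} [AddCommMonoid M]

/-- The sum of `g` over all words of length at most `N`. -/
def wordSum (N : ℕ) (g : Word → M) : M :=
  ∑ n ∈ Finset.range (N + 1), ∑ f : Fin n → Bool, g (List.ofFn f)

theorem wordSum_succ (N : ℕ) (g : Word → M) :
    wordSum (N + 1) g = g [] + wordSum N fun η => g (false :: η) + g (true :: η) := by
  rw [wordSum, Finset.sum_range_succ', Fintype.sum_unique, add_comm]
  congr 1
  refine Finset.sum_congr rfl fun n _ => ?_
  rw [← (Fin.consEquiv fun _ => Bool).sum_comp]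
  simp [Fintype.sum_prod_type, Finset.sum_add_distrib, add_comm]

theorem wordSum_eq_of_le {N K : ℕ} (hNK : N ≤ K) {g : Word → M}
    (hg : ∀ η : Word, N < η.length → g η = 0) : wordSum K g = wordSum N g := by
  refine (Finset.sum_subset (Finset.range_subset_range.2 (by omega)) fun n _ hn => ?_).symm
  exact Finset.sum_eq_zero fun f _ => hg _ (by simp at hn; simpa using hn)

theorem wordSum_add (N : ℕ) (g h : Word → M) :
    (wordSum N fun η => g η + h η) = wordSum N g + wordSum N h := by
  simp only [wordSum, Finset.sum_add_distrib]

theorem map_wordSum {N' F : Type*} [AddCommMonoid N'] [FunLike F M N'] [AddMonoidHomClass F M N']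
    (φ : F) (N : ℕ) (g : Word → M) : φ (wordSum N g) = wordSum N fun η => φ (g η) := by
  simp only [wordSum, map_sum]

theorem wordSum_apply {ι : Type*} {β : ι → Type*} [∀ i, AddCommMonoid (β i)] (N : ℕ)
    (g : Word → ∀ i, β i) (i : ι) : wordSum N g i = wordSum N fun η => g η i := by
  simp only [wordSum, Finset.sum_apply]

end WordSum

theorem mixcomp_apply (c : Series) (z : Series × Series) (w : Word) :
    mixcomp c z w = wordSum w.length fun η => c η * wmix η z w := rfl

theorem mixcomp_eq_wordSum (c : Series) (z : Series × Series) {w : Word} {N : ℕ}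
    (hw : w.length ≤ N) : mixcomp c z w = wordSum N (fun η => c η • wmix η z) w := by
  rw [wordSum_apply, mixcomp_apply]
  exact (wordSum_eq_of_le hw fun η hη => by
    simp [wmix_apply_of_length_lt z η w (by omega)]).symm

theorem shuffle_mixcomp_apply (s c : Series) (z : Series × Series) (w : Word) :
    shuffle s (mixcomp c z) w = wordSum w.length fun η => c η * shuffle s (wmix η z) w := by
  rw [shuffle_congr_right s w fun u hu => mixcomp_eq_wordSum c z hu]
  change Pi.evalAddMonoidHom (fun _ : Word => ℝ) w (shuffleLeft s (wordSum _ _)) = _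
  simp only [map_wordSum, map_smul]
  rfl

theorem mixcomp_nil (c : Series) (z : Series × Series) : mixcomp c z [] = c [] := by
  simp [mixcomp_apply, wordSum, wmix, oneS, deltaW]

theorem mixcomp_cons_true (c : Series) (z : Series × Series) (w : Word) :
    mixcomp c z (true :: w) = shuffle z.1 (mixcomp (leftQuot true c) z) w := by
  rw [mixcomp_apply, List.length_cons, wordSum_succ, shuffle_mixcomp_apply]
  simp [wmix, X0f, X1f, oneS, deltaW, leftQuot]

theorem mixcomp_cons_false (c : Series) (z : Series × Series) (w : Word) :
    mixcomp c z (false :: w) =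
      mixcomp (leftQuot false c) z w + shuffle z.2 (mixcomp (leftQuot true c) z) w := by
  rw [mixcomp_apply, List.length_cons, wordSum_succ, shuffle_mixcomp_apply, mixcomp_apply]
  simp [wmix, X0f, X1f, oneS, deltaW, leftQuot, wordSum_add]

section MixedComposition

variable (c : Series) (z : Series × Series)

theorem leftQuot_true_mixcomp :
    leftQuot true (mixcomp c z) = shuffle z.1 (mixcomp (leftQuot true c) z) :=
  funext (mixcomp_cons_true c z)

theorem leftQuot_false_mixcomp :
    leftQuot false (mixcomp c z) =
      mixcomp (leftQuot false c) z + shuffle z.2 (mixcomp (leftQuot true c) z) :=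
  funext (mixcomp_cons_false c z)

theorem mixcomp_add (c' : Series) : mixcomp (c + c') z = mixcomp c z + mixcomp c' z := by
  funext w
  simp only [mixcomp_apply, Pi.add_apply, add_mul, wordSum_add]

theorem mixcomp_zero : mixcomp 0 z = 0 := by
  funext w
  simp [mixcomp_apply, wordSum]

theorem mixcomp_oneS : mixcomp oneS z = oneS := by
  funext w
  rcases w with _ | ⟨_ | _, w⟩
  · simp [mixcomp_nil]
  · simp only [mixcomp_cons_false, leftQuot_oneS, mixcomp_zero, shuffle_zero_right, Pi.zero_apply,
      add_zero]
    simp [oneS, deltaW]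
  · simp only [mixcomp_cons_true, leftQuot_oneS, mixcomp_zero, shuffle_zero_right, Pi.zero_apply]
    simp [oneS, deltaW]

theorem mixcomp_geId : mixcomp c geId = c := by
  funext w
  induction w generalizing c with
  | nil => exact mixcomp_nil c geId
  | cons a w ih =>
    cases a
    · rw [mixcomp_cons_false, ih, show geId.2 = 0 from rfl, shuffle_zero_left, Pi.zero_apply,
        add_zero]
      rfl
    · rw [mixcomp_cons_true, show geId.1 = oneS from rfl, oneS_shuffle, ih]
      rfl

theorem mixcomp_shuffle (x y : Series) :
    mixcomp (shuffle x y) z = shuffle (mixcomp x z) (mixcomp y z) := by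
  funext w
  induction w using Word.length_induction generalizing x y with
  | nil => simp only [mixcomp_nil, shuffle_nil]
  | cons a w ih =>
    have ih' : ∀ s x y, shuffle s (mixcomp (shuffle x y) z) w =
        shuffle s (shuffle (mixcomp x z) (mixcomp y z)) w :=
      fun s x y => shuffle_congr_right s w fun u hu => ih u hu x y
    cases a
    · rw [mixcomp_cons_false, shuffle_cons, leftQuot_false_mixcomp, leftQuot_false_mixcomp]
      simp only [leftQuot_shuffle, mixcomp_add, shuffle_add_right, shuffle_add_left,
        Pi.add_apply, ih w le_rfl, ih']
      simp only [shuffle_comm, shuffle_left_comm]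
      ring
    · rw [mixcomp_cons_true, shuffle_cons, leftQuot_true_mixcomp, leftQuot_true_mixcomp]
      simp only [leftQuot_shuffle, mixcomp_add, shuffle_add_right, Pi.add_apply, ih']
      simp only [shuffle_comm, shuffle_left_comm]

end MixedComposition

theorem starOp_fst (c d : Series × Series) : (starOp c d).1 = shuffle (mixcomp c.1 d) d.1 := rfl

theorem starOp_snd (c d : Series × Series) :
    (starOp c d).2 = mixcomp c.2 d + shuffle (mixcomp c.1 d) d.2 := rfl

theorem mixcomp_mixcomp (c : Series) (d e : Series × Series) :
    mixcomp (mixcomp c d) e = mixcomp c (starOp d e) := by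
  funext w
  induction w using Word.length_induction generalizing c with
  | nil => simp only [mixcomp_nil]
  | cons a w ih =>
    have ih' : ∀ s c, shuffle s (mixcomp (mixcomp c d) e) w =
        shuffle s (mixcomp c (starOp d e)) w :=
      fun s c => shuffle_congr_right s w fun u hu => ih u hu c
    cases a
    · rw [mixcomp_cons_false, mixcomp_cons_false, leftQuot_false_mixcomp, leftQuot_true_mixcomp,
        mixcomp_add, Pi.add_apply, ih w le_rfl, mixcomp_shuffle, mixcomp_shuffle, ← shuffle_assoc]
      simp only [ih', starOp_snd, shuffle_add_left, Pi.add_apply]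
      simp only [shuffle_assoc, shuffle_comm]
      ring
    · rw [mixcomp_cons_true, mixcomp_cons_true, leftQuot_true_mixcomp, mixcomp_shuffle,
        ← shuffle_assoc, ih', starOp_fst, shuffle_comm e.1]

theorem starOp_assoc (c d e : Series × Series) :
    starOp (starOp c d) e = starOp c (starOp d e) := by
  ext1 <;> simp only [starOp_fst, starOp_snd, mixcomp_add, mixcomp_shuffle, mixcomp_mixcomp,
    shuffle_add_right, shuffle_assoc, add_assoc]

theorem starOp_geId (c : Series × Series) : starOp c geId = c := by
  ext1
  · rw [starOp_fst, mixcomp_geId]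
    exact shuffle_oneS c.1
  · rw [starOp_snd, mixcomp_geId, mixcomp_geId]
    simp [geId, shuffle_zero_right]

theorem geId_starOp (c : Series × Series) : starOp geId c = c := by
  ext1
  · rw [starOp_fst]
    simp [geId, mixcomp_oneS, oneS_shuffle]
  · rw [starOp_snd]
    simp [geId, mixcomp_zero, mixcomp_oneS, oneS_shuffle]

/-- the Grossman–Larson product c ⋆ d = (c ◁ d) · d on G is
associative, has identity e = (1∅,0), in components equals
((c₁ ∘̃ d) ⧢ d₁, (c₂ ∘̃ d) + (c₁ ∘̃ d) ⧢ d₂), and G is stable under it;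
hence (G, ⋆) is a monoid. -/
theorem starOp_monoid :
    (∀ c d e : Series × Series, c.1 [] = 1 → d.1 [] = 1 → e.1 [] = 1 →
      starOp (starOp c d) e = starOp c (starOp d e)) ∧
    (∀ c : Series × Series, c.1 [] = 1 → starOp c geId = c ∧ starOp geId c = c) ∧
    (∀ c d : Series × Series,
      starOp c d = (shuffle (mixcomp c.1 d) d.1,
                    mixcomp c.2 d + shuffle (mixcomp c.1 d) d.2)) ∧
    (∀ c d : Series × Series, c.1 [] = 1 → d.1 [] = 1 →
      (starOp c d).1 [] = 1) := by
  refine ⟨fun c d e _ _ _ => starOp_assoc c d e,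
    fun c _ => ⟨starOp_geId c, geId_starOp c⟩, fun _ _ => rfl, fun c d hc hd => ?_⟩
  rw [starOp_fst, shuffle_nil, mixcomp_nil, hc, hd, one_mul]
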